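/- Let n ≥ 1, k ≥ 1 with k + 2 ≤ n, and m ≥ 1. Let Y be a set of (k+2)-element subsets of {1,…,n} (a set of (k+1)-faces of Δ_n), and suppose there exists a k-cochain β on Δ_n such that dβ(τ) = 0 for every τ ∈ Y, β is not a coboundary, and ‖[β]‖ ≥ m. Then the number of (k+2)-element subsets of {1,…,n} not belonging to Y is at least (n/(k+2)) · m. -/

import Mathlib

/-- The faces of the complete simplicial complex on vertex set `Fin n`,
indexed by cardinality: an element of `SFace n m` is an `m`-element subset
of `{1, …, n}` (so a `(m-1)`-dimensional face). -/
abbrev SFace (n m : ℕ) : Type := {σ : Finset (Fin n) // σ.card = m}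

/-- The norm of a `ZMod 2`-cochain: the size of its support. -/
def cnorm {X : Type} [Fintype X] (β : X → ZMod 2) : ℕ :=
  (Finset.univ.filter fun x => β x ≠ 0).card

/-- The simplicial coboundary map on the complete complex: for a cochain `β`
on `m`-element subsets, `sd β` evaluated on an `(m+1)`-element subset `τ` is
the sum of `β σ` over all `m`-element subsets `σ ⊆ τ`. -/
def sd {n m : ℕ} (β : SFace n m → ZMod 2) : SFace n (m + 1) → ZMod 2 :=
  fun τ => ∑ σ : SFace n m, if σ.1 ⊆ τ.1 then β σ else 0

/-- A `k`-cochain is a coboundary if it is `dα` for some `(k-1)`-cochain `α`. -/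
def IsCob {n k : ℕ} (β : SFace n (k + 1) → ZMod 2) : Prop :=
  ∃ α : SFace n k → ZMod 2, sd α = β

/-- The quotient norm `‖[β]‖ = min_α ‖β + dα‖` of a `k`-cochain. -/
noncomputable def qnorm {n k : ℕ} (β : SFace n (k + 1) → ZMod 2) : ℕ :=
  sInf {m | ∃ α : SFace n k → ZMod 2, m = cnorm (β + sd α)}

/-! Let `d` be the coboundary. For a vertex `v`, the cone `α_v(ρ) = β(ρ ∪ {v})` (for `v ∉ ρ`) is a
contracting homotopy of the complete complex: `β + dα_v` vanishes on the faces containing `v`, and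
on a face `σ ∌ v` it equals `dβ(σ ∪ {v})`. Hence `‖β + dα_v‖` counts the faces of `supp dβ`
through `v`, and summing over the `n` vertices counts each face of `supp dβ` once per vertex,
giving `n · ‖[β]‖ ≤ (k + 2) · ‖dβ‖`. A cocycle on `Y` has `supp dβ` outside `Y`. -/

open Finset

section

variable {n : ℕ}

def extendByZero {m : ℕ} (β : SFace n m → ZMod 2) (s : Finset (Fin n)) : ZMod 2 :=
  if h : s.card = m then β ⟨s, h⟩ else 0

lemma extendByZero_of_card_eq {m : ℕ} (β : SFace n m → ZMod 2) {s : Finset (Fin n)}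
    (h : s.card = m) : extendByZero β s = β ⟨s, h⟩ :=
  dif_pos h

@[simp]
lemma extendByZero_coe {m : ℕ} (β : SFace n m → ZMod 2) (σ : SFace n m) :
    extendByZero β σ.1 = β σ :=
  extendByZero_of_card_eq β σ.2

lemma sd_apply_eq_sum_powersetCard {m : ℕ} (β : SFace n m → ZMod 2) (τ : SFace n (m + 1)) :
    sd β τ = ∑ s ∈ τ.1.powersetCard m, extendByZero β s := by
  rw [sd, ← sum_filter]
  refine sum_bij' (fun σ _ => σ.1) (fun s hs => ⟨s, (mem_powersetCard.1 hs).2⟩)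
    (fun σ hσ => mem_powersetCard.2 ⟨(mem_filter.1 hσ).2, σ.2⟩)
    (fun s hs => mem_filter.2 ⟨mem_univ _, (mem_powersetCard.1 hs).1⟩)
    (fun _ _ => rfl) (fun _ _ => rfl) (fun σ _ => (extendByZero_coe β σ).symm)

lemma qnorm_le_cnorm_add_sd {k : ℕ} (β : SFace n (k + 1) → ZMod 2) (α : SFace n k → ZMod 2) :
    qnorm β ≤ cnorm (β + sd α) :=
  Nat.sInf_le ⟨α, rfl⟩

lemma cnorm_le_card_filter_notMem {X : Type} [Fintype X] [DecidableEq X] (f : X → ZMod 2)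
    (Y : Finset X) (hY : ∀ x ∈ Y, f x = 0) : cnorm f ≤ (univ.filter fun x => x ∉ Y).card :=
  card_le_card fun x hx => by
    simp only [mem_filter, mem_univ, true_and] at hx ⊢
    exact fun hxY => hx (hY x hxY)

lemma powersetCard_eq_singleton {α : Type*} {s : Finset α} {m : ℕ} (h : s.card = m) :
    s.powersetCard m = {s} :=
  h ▸ powersetCard_self s

section Cone

variable {k : ℕ} (β : SFace n (k + 1) → ZMod 2) (v : Fin n)

def cone : SFace n k → ZMod 2 :=
  fun ρ => if v ∈ ρ.1 then 0 else extendByZero β (insert v ρ.1)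

lemma sd_cone_apply (σ : SFace n (k + 1)) :
    sd (cone β v) σ = ∑ r ∈ (σ.1.erase v).powersetCard k, extendByZero β (insert v r) := by
  have hfilter : (σ.1.powersetCard k).filter (fun r => v ∉ r) = (σ.1.erase v).powersetCard k := by
    ext r
    simp only [mem_filter, mem_powersetCard, subset_erase]
    tauto
  rw [sd_apply_eq_sum_powersetCard, ← hfilter, sum_filter]
  refine sum_congr rfl fun r hr => ?_
  simp only [cone, extendByZero_of_card_eq _ (mem_powersetCard.1 hr).2]
  split_ifs <;> rfl

lemma sd_cone_apply_of_mem {σ : SFace n (k + 1)} (hv : v ∈ σ.1) : sd (cone β v) σ = β σ := by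
  have hcard : (σ.1.erase v).card = k := by rw [card_erase_of_mem hv, σ.2]; rfl
  rw [sd_cone_apply, powersetCard_eq_singleton hcard, sum_singleton, insert_erase hv,
    extendByZero_coe]

lemma add_sd_cone_apply_of_notMem {σ : SFace n (k + 1)} (hv : v ∉ σ.1) :
    β σ + sd (cone β v) σ = extendByZero (sd β) (insert v σ.1) := by
  have hcard : (insert v σ.1).card = k + 1 + 1 := by rw [card_insert_of_notMem hv, σ.2]
  have hinj : Set.InjOn (insert v) (σ.1.powersetCard k : Set (Finset (Fin n))) :=
    fun r hr s hs h => by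
      have hvr : v ∉ r := fun h' => hv ((mem_powersetCard.1 hr).1 h')
      have hvs : v ∉ s := fun h' => hv ((mem_powersetCard.1 hs).1 h')
      rw [← erase_insert hvr, ← erase_insert hvs, h]
  have hdisj : Disjoint (σ.1.powersetCard (k + 1)) ((σ.1.powersetCard k).image (insert v)) :=
    disjoint_left.2 fun s hs hs' => by
      obtain ⟨r, -, rfl⟩ := mem_image.1 hs'
      exact hv ((mem_powersetCard.1 hs).1 (mem_insert_self v r))
  rw [sd_cone_apply, erase_eq_of_notMem hv, extendByZero_of_card_eq _ hcard,
    sd_apply_eq_sum_powersetCard, powersetCard_succ_insert hv, sum_union hdisj, sum_image hinj,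
    powersetCard_eq_singleton σ.2, sum_singleton, extendByZero_coe]

lemma cnorm_add_sd_cone :
    cnorm (β + sd (cone β v)) =
      (univ.filter fun τ : SFace n (k + 2) => sd β τ ≠ 0 ∧ v ∈ τ.1).card := by
  have hsupp : univ.filter (fun σ => (β + sd (cone β v)) σ ≠ 0)
      = univ.filter fun σ : SFace n (k + 1) =>
          v ∉ σ.1 ∧ extendByZero (sd β) (insert v σ.1) ≠ 0 := by
    refine filter_congr fun σ _ => ?_
    by_cases hv : v ∈ σ.1
    · simp [sd_cone_apply_of_mem β v hv, CharTwo.add_self_eq_zero, hv]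
    · simp [add_sd_cone_apply_of_notMem β v hv, hv]
  rw [cnorm, hsupp]
  refine card_bij' (fun σ hσ => ⟨insert v σ.1, ?_⟩) (fun τ hτ => ⟨τ.1.erase v, ?_⟩) ?_ ?_ ?_ ?_
  · rw [card_insert_of_notMem (mem_filter.1 hσ).2.1, σ.2]
  · rw [card_erase_of_mem (mem_filter.1 hτ).2.2, τ.2]; rfl
  · intro σ hσ
    obtain ⟨-, hv, hne⟩ := mem_filter.1 hσ
    rw [extendByZero_of_card_eq _ (by rw [card_insert_of_notMem hv, σ.2])] at hne
    exact mem_filter.2 ⟨mem_univ _, hne, mem_insert_self v σ.1⟩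
  · intro τ hτ
    obtain ⟨-, hne, hv⟩ := mem_filter.1 hτ
    refine mem_filter.2 ⟨mem_univ _, notMem_erase v τ.1, ?_⟩
    rwa [insert_erase hv, extendByZero_coe]
  · intro σ hσ
    exact Subtype.ext (erase_insert (mem_filter.1 hσ).2.1)
  · intro τ hτ
    exact Subtype.ext (insert_erase (mem_filter.1 hτ).2.2)

lemma sum_cnorm_add_sd_cone :
    ∑ v, cnorm (β + sd (cone β v)) = (k + 2) * cnorm (sd β) := by
  have hcount := sum_card_bipartiteAbove_eq_sum_card_bipartiteBelow
    (fun v (τ : SFace n (k + 2)) => v ∈ τ.1) (s := univ) (t := univ.filter fun τ => sd β τ ≠ 0)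
  simp only [bipartiteAbove, bipartiteBelow, filter_filter, filter_univ_mem] at hcount
  rw [funext (cnorm_add_sd_cone β), hcount, sum_congr rfl fun τ _ => τ.2, sum_const, cnorm,
    smul_eq_mul, mul_comm]

lemma card_mul_qnorm_le : n * qnorm β ≤ (k + 2) * cnorm (sd β) :=
  calc n * qnorm β = ∑ _v : Fin n, qnorm β := by simp
    _ ≤ ∑ v, cnorm (β + sd (cone β v)) := sum_le_sum fun v _ => qnorm_le_cnorm_add_sd β _
    _ = (k + 2) * cnorm (sd β) := sum_cnorm_add_sd_cone β

end Cone

end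

theorem deletion_bound_general (n k m : ℕ)
    (Y : Finset (SFace n (k + 2)))
    (hβ : ∃ β : SFace n (k + 1) → ZMod 2,
      (∀ τ ∈ Y, sd β τ = 0) ∧ ¬ IsCob β ∧ m ≤ qnorm β) :
    ((n : ℝ) / (k + 2)) * m ≤
      ((Finset.univ.filter fun τ : SFace n (k + 2) => τ ∉ Y).card : ℝ) := by
  obtain ⟨β, hY, -, hq⟩ := hβ
  have hcard : n * m ≤ (k + 2) * (univ.filter fun τ => τ ∉ Y).card :=
    calc n * m ≤ n * qnorm β := Nat.mul_le_mul_left n hq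
      _ ≤ (k + 2) * cnorm (sd β) := card_mul_qnorm_le β
      _ ≤ (k + 2) * (univ.filter fun τ => τ ∉ Y).card :=
        Nat.mul_le_mul_left _ (cnorm_le_card_filter_notMem _ Y hY)
  rw [div_mul_eq_mul_div, div_le_iff₀ (by positivity), mul_comm _ ((k : ℝ) + 2)]
  exact_mod_cast hcard

/-- if deleting the `(k+1)`-faces of `Δ_n` outside `Y` creates a
`k`-cocycle `β` of `Y` which is not a coboundary and has quotient norm at least
`m`, then at least `(n/(k+2))·m` many `(k+1)`-faces of `Δ_n` are missing
from `Y`. -/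
theorem deletion_bound (n k m : ℕ) (hn : 1 ≤ n) (hk : 1 ≤ k) (hkn : k + 2 ≤ n) (hm : 1 ≤ m)
    (Y : Finset (SFace n (k + 2)))
    (hβ : ∃ β : SFace n (k + 1) → ZMod 2,
      (∀ τ ∈ Y, sd β τ = 0) ∧ ¬ IsCob β ∧ m ≤ qnorm β) :
    ((n : ℝ) / (k + 2)) * m ≤
      ((Finset.univ.filter fun τ : SFace n (k + 2) => τ ∉ Y).card : ℝ) :=
  deletion_bound_general n k m Y hβ
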